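/- arXiv:2402.16016 — 2 statements merged into one kernel-verified Lean document; each statement's English description precedes it below -/
import Mathlib

section
/- Let k1, k2 ≥ 2 and let Y be a set of (k1−1)·k2 Boolean variables partitioned into k1−1 blocks of size k2. Consider the formula that contains, for each block, the clause which is the disjunction of the negations of the variables in that block, and, for every (k1−1)-element subset S of Y, the clause x ∨ (disjunction of variables in S), where x is an additional variable. Then every satisfying assignment of this formula sets x to true. -/
/-- Variables of `Y` are indexed by `Fin (k1-1) × Fin k2`, the first coordinate
being the block. -/
theorem stmt9 (k1 k2 : ℕ) (hk1 : 2 ≤ k1) (hk2 : 2 ≤ k2)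
    (a : Fin (k1 - 1) × Fin k2 → Bool) (x : Bool)
    (hblock : ∀ b : Fin (k1 - 1), ∃ j : Fin k2, a (b, j) = false)
    (hsub : ∀ S : Finset (Fin (k1 - 1) × Fin k2), S.card = k1 - 1 →
      x = true ∨ ∃ s ∈ S, a s = true) :
    x = true := by
  choose f hf using hblock
  have hinj : Function.Injective (fun b : Fin (k1 - 1) => (b, f b)) := by
    intro b1 b2 h
    simpa using congrArg Prod.fst h
  have hcard : (Finset.univ.image (fun b : Fin (k1 - 1) => (b, f b))).card = k1 - 1 := by
    rw [Finset.card_image_of_injective _ hinj, Finset.card_univ, Fintype.card_fin]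
  rcases hsub _ hcard with h | ⟨s, hs, hst⟩
  · exact h
  · obtain ⟨b, -, rfl⟩ := Finset.mem_image.mp hs
    simp [hf b] at hst
end

section
/- Let G = (V, E) be a finite simple graph and V' ⊆ V a set of k' vertices such that the induced subgraph G[V'] contains no clique of size k (where k ≤ k'). Then there exist at least k' − k + 1 pairwise-distinct unordered pairs of non-adjacent vertices within V'. -/
lemma stmt11_aux {V : Type*} [DecidableEq V] (G : SimpleGraph V) (k : ℕ) (hk2 : 2 ≤ k) :
    ∀ n (V' : Finset V), V'.card = k + n →
    (¬ ∃ S ⊆ V', S.card = k ∧ ∀ u ∈ S, ∀ v ∈ S, u ≠ v → G.Adj u v) →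
    ∃ P : Finset (Sym2 V), n + 1 ≤ P.card ∧
      ∀ p ∈ P, ∃ u v : V, u ∈ V' ∧ v ∈ V' ∧ u ≠ v ∧ ¬ G.Adj u v ∧ p = s(u, v) := by
  intro n
  induction n with
  | zero =>
    intro V' hcard hnc
    push_neg at hnc
    obtain ⟨u, hu, v, hv, huv, hnadj⟩ := hnc V' le_rfl (by simpa using hcard)
    refine ⟨{s(u, v)}, by simp, ?_⟩
    intro p hp
    simp only [Finset.mem_singleton] at hp
    exact ⟨u, v, hu, hv, huv, hnadj, hp⟩
  | succ n ih =>
    intro V' hcard hnc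
    obtain ⟨S, hS, hScard⟩ := Finset.exists_subset_card_eq (show k ≤ V'.card by omega)
    push_neg at hnc
    obtain ⟨u, hu, v, hv, huv, hnadj⟩ := hnc S hS hScard
    have huV : u ∈ V' := hS hu
    have hvV : v ∈ V' := hS hv
    have hcard' : (V'.erase u).card = k + n := by
      rw [Finset.card_erase_of_mem huV]; omega
    have hnc' : ¬ ∃ T ⊆ V'.erase u, T.card = k ∧ ∀ a ∈ T, ∀ b ∈ T, a ≠ b → G.Adj a b := by
      push_neg
      intro T hT hTcard
      exact hnc T (hT.trans (Finset.erase_subset _ _)) hTcard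
    obtain ⟨P', hP'card, hP'⟩ := ih (V'.erase u) hcard' hnc'
    have hnotmem : s(u, v) ∉ P' := by
      intro hmem
      obtain ⟨a, b, ha, hb, -, -, hab⟩ := hP' _ hmem
      have : u = a ∨ u = b := by
        rw [Sym2.eq_iff] at hab
        rcases hab with ⟨h1, -⟩ | ⟨h2, -⟩
        · exact Or.inl h1
        · exact Or.inr h2
      rcases this with rfl | rfl
      · exact (Finset.notMem_erase u V') ha
      · exact (Finset.notMem_erase u V') hb
    refine ⟨insert s(u, v) P', ?_, ?_⟩
    · rw [Finset.card_insert_of_notMem hnotmem]; omega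
    · intro p hp
      rcases Finset.mem_insert.mp hp with rfl | hp'
      · exact ⟨u, v, huV, hvV, huv, hnadj, rfl⟩
      · obtain ⟨a, b, ha, hb, h1, h2, h3⟩ := hP' p hp'
        exact ⟨a, b, Finset.mem_of_mem_erase ha, Finset.mem_of_mem_erase hb, h1, h2, h3⟩

theorem stmt11 {V : Type*} [DecidableEq V] (G : SimpleGraph V) (V' : Finset V)
    (k k' : ℕ) (hcard : V'.card = k') (hk : k ≤ k')
    (hnoclique : ¬ ∃ S ⊆ V', S.card = k ∧ ∀ u ∈ S, ∀ v ∈ S, u ≠ v → G.Adj u v) :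
    ∃ P : Finset (Sym2 V), k' - k + 1 ≤ P.card ∧
      ∀ p ∈ P, ∃ u v : V, u ∈ V' ∧ v ∈ V' ∧ u ≠ v ∧ ¬ G.Adj u v ∧ p = s(u, v) := by
  rcases Nat.lt_or_ge k 2 with hk2 | hk2
  · exfalso
    interval_cases k
    · exact hnoclique ⟨∅, Finset.empty_subset _, by simp⟩
    · have : V'.Nonempty := by rw [← Finset.card_pos]; omega
      obtain ⟨x, hx⟩ := this
      exact hnoclique ⟨{x}, by simpa using hx, by simp⟩
  · obtain ⟨P, h1, h2⟩ := stmt11_aux G k hk2 (k' - k) V' (by omega) hnoclique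
    exact ⟨P, by omega, h2⟩
end
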